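/- arXiv:0902.0268 — 3 statements merged into one kernel-verified Lean document; each statement's English description precedes it below -/
import Mathlib

section
/- Let p ≥ 1 be an integer and let a, b be positive reals with a² + b² = 1. Then the equation -1 - 2p(a²/b² + b²/a²) + (4p + 1) + 4 = 0 holds if and only if a² = (2p + 1 + √(2p+1))/(4p + 2) or a² = (2p + 1 - √(2p+1))/(4p + 2). -/
/-! With `x = a²` and `b² = 1 - x`, clearing the denominator `x (1 - x)` turns the condition into
the quadratic `(4p + 2) x² - (4p + 2) x + p = 0`, whose discriminant is `4 (2p + 1)`. -/

open Real

lemma biharmonic_coeff_eq_zero_iff_quadratic {p x y : ℝ} (hx : x ≠ 0) (hy : y ≠ 0)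
    (hxy : x + y = 1) :
    -1 - 2 * p * (x / y + y / x) + (4 * p + 1) + 4 = 0 ↔
      (4 * p + 2) * (x * x) + -(4 * p + 2) * x + p = 0 := by
  obtain rfl : y = 1 - x := by linarith
  have hcleared : -1 - 2 * p * (x / (1 - x) + (1 - x) / x) + (4 * p + 1) + 4 =
      -2 * ((4 * p + 2) * (x * x) + -(4 * p + 2) * x + p) / (x * (1 - x)) := by
    field_simp
    ring
  rw [hcleared, div_eq_zero_iff, mul_eq_zero]
  simp [hx, hy]

lemma quadratic_eq_zero_iff_sqrt_two_mul_add_one {p : ℝ} (hp : 0 < 2 * p + 1) (x : ℝ) :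
    (4 * p + 2) * (x * x) + -(4 * p + 2) * x + p = 0 ↔
      x = (2 * p + 1 + √(2 * p + 1)) / (4 * p + 2) ∨
        x = (2 * p + 1 - √(2 * p + 1)) / (4 * p + 2) := by
  have hdiscrim : discrim (4 * p + 2) (-(4 * p + 2)) p =
      (2 * √(2 * p + 1)) * (2 * √(2 * p + 1)) := by
    rw [discrim, mul_mul_mul_comm, mul_self_sqrt hp.le]
    ring
  rw [quadratic_eq_zero_iff (by linarith) hdiscrim]
  have hne : 4 * p + 2 ≠ 0 := by linarith
  congr! 2 <;> field_simp <;> ring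

theorem stmt_4_general (p : ℕ) (a b : ℝ) (ha : 0 < a) (hb : 0 < b)
    (hab : a ^ 2 + b ^ 2 = 1) :
    -1 - 2 * (p : ℝ) * (a ^ 2 / b ^ 2 + b ^ 2 / a ^ 2) + (4 * (p : ℝ) + 1) + 4 = 0 ↔
      a ^ 2 = (2 * (p : ℝ) + 1 + Real.sqrt (2 * (p : ℝ) + 1)) / (4 * (p : ℝ) + 2) ∨
      a ^ 2 = (2 * (p : ℝ) + 1 - Real.sqrt (2 * (p : ℝ) + 1)) / (4 * (p : ℝ) + 2) := by
  rw [biharmonic_coeff_eq_zero_iff_quadratic (by positivity) (by positivity) hab]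
  exact quadratic_eq_zero_iff_sqrt_two_mul_add_one (by positivity) _

theorem stmt_4 (p : ℕ) (hp : 1 ≤ p) (a b : ℝ) (ha : 0 < a) (hb : 0 < b)
    (hab : a ^ 2 + b ^ 2 = 1) :
    -1 - 2 * (p : ℝ) * (a ^ 2 / b ^ 2 + b ^ 2 / a ^ 2) + (4 * (p : ℝ) + 1) + 4 = 0 ↔
      a ^ 2 = (2 * (p : ℝ) + 1 + Real.sqrt (2 * (p : ℝ) + 1)) / (4 * (p : ℝ) + 2) ∨
      a ^ 2 = (2 * (p : ℝ) + 1 - Real.sqrt (2 * (p : ℝ) + 1)) / (4 * (p : ℝ) + 2) :=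
  stmt_4_general p a b ha hb hab
end

section
/- Define γ : ℝ → ℝ⁴ by γ(s) = ((√(2−√2)/2)cos((√2+1)s), −(√(2−√2)/2)sin((√2+1)s), (√(2+√2)/2)cos((√2−1)s), (√(2+√2)/2)sin((√2−1)s)). Then for all s: |γ(s)|² = 1, |γ′(s)|² = 1, ⟨γ(s), γ′(s)⟩ = 0, |γ″(s)|² = 5, ⟨γ(s), γ″(s)⟩ = −1, and γ⁗(s) + 6γ″(s) + γ(s) = 0. -/
/-!
The curve is the product helix `s ↦ (a e^{-iws}, b e^{ims})` in `ℂ² = ℝ⁴` with `a² = (2 - √2)/4`,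
`b² = (2 + √2)/4`, `w = √2 + 1`, `m = √2 - 1`. Differentiating twice multiplies the two amplitudes by
`-w²` and `-m²`, and the two circles are orthogonal, so every identity reduces to arithmetic in the
amplitudes: `a² + b² = 1`, and `w²`, `m²` are the roots `3 ± 2√2` of `t² - 6t + 1`.
-/

open Real

theorem EuclideanSpace.hasDerivAt_of_forall_apply {ι : Type*} [Fintype ι]
    {f : ℝ → EuclideanSpace ℝ ι} {f' : EuclideanSpace ℝ ι} {x : ℝ}
    (h : ∀ i, HasDerivAt (fun t => f t i) (f' i) x) : HasDerivAt f f' x :=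
  (EuclideanSpace.equiv ι ℝ).symm.hasFDerivAt.comp_hasDerivAt x (hasDerivAt_pi.2 h)

theorem hasDerivAt_mul_cos_mul (a w s : ℝ) :
    HasDerivAt (fun t => a * cos (w * t)) (-(a * w * sin (w * s))) s :=
  (((hasDerivAt_id' s).const_mul w).cos.const_mul a).congr_deriv (by ring)

theorem hasDerivAt_mul_sin_mul (a w s : ℝ) :
    HasDerivAt (fun t => a * sin (w * t)) (a * w * cos (w * s)) s :=
  (((hasDerivAt_id' s).const_mul w).sin.const_mul a).congr_deriv (by ring)

noncomputable def helix (a b w m s : ℝ) : EuclideanSpace ℝ (Fin 4) :=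
  !₂[a * cos (w * s), -a * sin (w * s), b * cos (m * s), b * sin (m * s)]

noncomputable def helixVelocity (a b w m s : ℝ) : EuclideanSpace ℝ (Fin 4) :=
  !₂[-(a * w) * sin (w * s), -(a * w) * cos (w * s), -(b * m) * sin (m * s), b * m * cos (m * s)]

section Helix

variable (a b w m : ℝ)

theorem hasDerivAt_helix (s : ℝ) : HasDerivAt (helix a b w m) (helixVelocity a b w m s) s := by
  refine EuclideanSpace.hasDerivAt_of_forall_apply fun i => ?_
  fin_cases i <;>
    simp only [helix, helixVelocity, Fin.isValue, Fin.zero_eta, Fin.mk_one, Fin.reduceFinMk,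
      Matrix.cons_val, Matrix.cons_val_zero, Matrix.cons_val_one, neg_mul]
  · exact hasDerivAt_mul_cos_mul a w s
  · exact (hasDerivAt_mul_sin_mul a w s).neg
  · exact hasDerivAt_mul_cos_mul b m s
  · exact hasDerivAt_mul_sin_mul b m s

theorem hasDerivAt_helixVelocity (s : ℝ) :
    HasDerivAt (helixVelocity a b w m) (helix (-(a * w ^ 2)) (-(b * m ^ 2)) w m s) s := by
  refine EuclideanSpace.hasDerivAt_of_forall_apply fun i => ?_
  fin_cases i <;>
    simp only [helix, helixVelocity, Fin.isValue, Fin.zero_eta, Fin.mk_one, Fin.reduceFinMk,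
      Matrix.cons_val, Matrix.cons_val_zero, Matrix.cons_val_one, neg_mul, neg_neg]
  · exact (hasDerivAt_mul_sin_mul (a * w) w s).neg.congr_deriv (by ring)
  · exact (hasDerivAt_mul_cos_mul (a * w) w s).neg.congr_deriv (by ring)
  · exact (hasDerivAt_mul_sin_mul (b * m) m s).neg.congr_deriv (by ring)
  · exact (hasDerivAt_mul_cos_mul (b * m) m s).congr_deriv (by ring)

theorem deriv_helix : deriv (helix a b w m) = helixVelocity a b w m :=
  funext fun s => (hasDerivAt_helix a b w m s).deriv

theorem deriv_helixVelocity :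
    deriv (helixVelocity a b w m) = helix (-(a * w ^ 2)) (-(b * m ^ 2)) w m :=
  funext fun s => (hasDerivAt_helixVelocity a b w m s).deriv

theorem iteratedDeriv_one_helix : iteratedDeriv 1 (helix a b w m) = helixVelocity a b w m := by
  rw [iteratedDeriv_one, deriv_helix]

theorem iteratedDeriv_add_two_helix (n : ℕ) :
    iteratedDeriv (n + 2) (helix a b w m) =
      iteratedDeriv n (helix (-(a * w ^ 2)) (-(b * m ^ 2)) w m) := by
  rw [iteratedDeriv_succ', iteratedDeriv_succ', deriv_helix, deriv_helixVelocity]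

theorem iteratedDeriv_two_helix :
    iteratedDeriv 2 (helix a b w m) = helix (-(a * w ^ 2)) (-(b * m ^ 2)) w m :=
  iteratedDeriv_add_two_helix a b w m 0

theorem iteratedDeriv_four_helix :
    iteratedDeriv 4 (helix a b w m) = helix (a * w ^ 4) (b * m ^ 4) w m := by
  rw [iteratedDeriv_add_two_helix, iteratedDeriv_two_helix]
  ring_nf

variable (s : ℝ)

theorem inner_helix_helix (a' b' : ℝ) :
    inner ℝ (helix a b w m s) (helix a' b' w m s) = a * a' + b * b' := by
  simp only [helix, PiLp.inner_apply, RCLike.inner_apply, conj_trivial, Fin.sum_univ_four,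
    Fin.isValue, Matrix.cons_val, Matrix.cons_val_zero, Matrix.cons_val_one]
  linear_combination (a * a') * sin_sq_add_cos_sq (w * s) + (b * b') * sin_sq_add_cos_sq (m * s)

theorem norm_sq_helix : ‖helix a b w m s‖ ^ 2 = a ^ 2 + b ^ 2 := by
  rw [← real_inner_self_eq_norm_sq, inner_helix_helix]
  ring

theorem inner_helix_helixVelocity : inner ℝ (helix a b w m s) (helixVelocity a b w m s) = 0 := by
  simp only [helix, helixVelocity, PiLp.inner_apply, RCLike.inner_apply, conj_trivial,
    Fin.sum_univ_four, Fin.isValue, Matrix.cons_val, Matrix.cons_val_zero, Matrix.cons_val_one]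
  ring

theorem norm_sq_helixVelocity : ‖helixVelocity a b w m s‖ ^ 2 = (a * w) ^ 2 + (b * m) ^ 2 := by
  simp only [helixVelocity, EuclideanSpace.norm_sq_eq, norm_eq_abs, sq_abs, Fin.sum_univ_four,
    Fin.isValue, Matrix.cons_val, Matrix.cons_val_zero, Matrix.cons_val_one]
  linear_combination (a * w) ^ 2 * sin_sq_add_cos_sq (w * s) + (b * m) ^ 2 * sin_sq_add_cos_sq (m * s)

theorem iteratedDeriv_four_add_smul_iteratedDeriv_two_add_helix {p : ℝ}
    (hw : w ^ 4 - p * w ^ 2 + 1 = 0) (hm : m ^ 4 - p * m ^ 2 + 1 = 0) :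
    iteratedDeriv 4 (helix a b w m) s + p • iteratedDeriv 2 (helix a b w m) s + helix a b w m s
      = 0 := by
  rw [iteratedDeriv_four_helix, iteratedDeriv_two_helix]
  ext i
  fin_cases i <;>
    simp only [helix, PiLp.add_apply, PiLp.smul_apply, PiLp.zero_apply, smul_eq_mul, Fin.isValue,
      Fin.zero_eta, Fin.mk_one, Fin.reduceFinMk, Matrix.cons_val, Matrix.cons_val_zero,
      Matrix.cons_val_one]
  · linear_combination a * cos (w * s) * hw
  · linear_combination -a * sin (w * s) * hw
  · linear_combination b * cos (m * s) * hm
  · linear_combination b * sin (m * s) * hm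

end Helix

theorem stmt_9 (γ : ℝ → EuclideanSpace ℝ (Fin 4))
    (hγ : ∀ s, γ s = (WithLp.equiv 2 (Fin 4 → ℝ)).symm
      ![(Real.sqrt (2 - Real.sqrt 2) / 2) * Real.cos ((Real.sqrt 2 + 1) * s),
        -(Real.sqrt (2 - Real.sqrt 2) / 2) * Real.sin ((Real.sqrt 2 + 1) * s),
        (Real.sqrt (2 + Real.sqrt 2) / 2) * Real.cos ((Real.sqrt 2 - 1) * s),
        (Real.sqrt (2 + Real.sqrt 2) / 2) * Real.sin ((Real.sqrt 2 - 1) * s)]) :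
    ∀ s : ℝ,
      ‖γ s‖ ^ 2 = 1 ∧
      ‖iteratedDeriv 1 γ s‖ ^ 2 = 1 ∧
      inner ℝ (γ s) (iteratedDeriv 1 γ s) = (0 : ℝ) ∧
      ‖iteratedDeriv 2 γ s‖ ^ 2 = 5 ∧
      inner ℝ (γ s) (iteratedDeriv 2 γ s) = (-1 : ℝ) ∧
      iteratedDeriv 4 γ s + (6 : ℝ) • iteratedDeriv 2 γ s + γ s = 0 := by
  obtain rfl : γ = helix (√(2 - √2) / 2) (√(2 + √2) / 2) (√2 + 1) (√2 - 1) := funext hγ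
  have h2 : √2 ^ 2 = 2 := sq_sqrt zero_le_two
  have ha : (√(2 - √2) / 2) ^ 2 = (2 - √2) / 4 := by
    rw [div_pow, sq_sqrt (by nlinarith [sqrt_nonneg 2])]
    norm_num
  have hb : (√(2 + √2) / 2) ^ 2 = (2 + √2) / 4 := by
    rw [div_pow, sq_sqrt (by positivity)]
    norm_num
  intro s
  refine ⟨?_, ?_, ?_, ?_, ?_, ?_⟩
  · rw [norm_sq_helix, ha, hb]
    ring
  · rw [iteratedDeriv_one_helix, norm_sq_helixVelocity, mul_pow, mul_pow, ha, hb]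
    ring
  · rw [iteratedDeriv_one_helix, inner_helix_helixVelocity]
  · rw [iteratedDeriv_two_helix, norm_sq_helix, neg_sq, neg_sq, mul_pow, mul_pow, ha, hb]
    linear_combination (2 - √2 ^ 2) * h2
  · rw [iteratedDeriv_two_helix, inner_helix_helix]
    linear_combination (-(√2 + 1) ^ 2) * ha - (√2 - 1) ^ 2 * hb
  · refine iteratedDeriv_four_add_smul_iteratedDeriv_two_add_helix _ _ _ _ _ ?_ ?_
    · linear_combination (√2 ^ 2 + 4 * √2 + 2) * h2
    · linear_combination (√2 ^ 2 - 4 * √2 + 2) * h2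
end

section
/- Let k₁, k₂, k₃ > 0 and α₀ ∈ (π/2, π) ∪ (3π/2, 2π) satisfy: k₁² + k₂² = 1 + 3cos²α₀, k₂k₃ = −(3/2)sin(2α₀), and k₁²sin²α₀ = (k₂cos α₀ − k₃sin α₀)². Then k₂² is a root of t² + sin²α₀(3cos²α₀ − 1)t + 9sin⁴α₀cos²α₀ = 0, and consequently k₂² ∈ (0, 4) (so k₁² = 1 + 3cos²α₀ − k₂² > 0 automatically). -/
/-! Put `t = k₂²`. The second equation gives `k₂ k₃ = -3 s c` with `s = sin α₀`, `c = cos α₀`,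
so `k₂ (k₂ c - k₃ s) = c (t + 3 s²)`; multiplying the third equation by `t` and substituting
`k₁² = 1 + 3 c² - t` from the first leaves `t (1 + 3 c² - t) s² = c² (t + 3 s²)²`, which is the
quadratic in `t` once `s² + c² = 1` is used. The bound `t < 4` is just `t < 1 + 3 c² ≤ 4`,
since `k₁² > 0`. -/

open Real

lemma quadratic_of_curvature_eqns {k₁ k₂ k₃ s c : ℝ} (hsc : s ^ 2 + c ^ 2 = 1)
    (h1 : k₁ ^ 2 + k₂ ^ 2 = 1 + 3 * c ^ 2) (h2 : k₂ * k₃ = -(3 / 2) * (2 * s * c))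
    (h3 : k₁ ^ 2 * s ^ 2 = (k₂ * c - k₃ * s) ^ 2) :
    (k₂ ^ 2) ^ 2 + s ^ 2 * (3 * c ^ 2 - 1) * k₂ ^ 2 + 9 * s ^ 4 * c ^ 2 = 0 := by
  linear_combination s ^ 2 * k₂ ^ 2 * h1 - k₂ ^ 2 * h3 +
    (2 * k₂ ^ 2 * s * c - s ^ 2 * (k₂ * k₃ - 3 * s * c)) * h2 - k₂ ^ 4 * hsc

lemma sq_lt_four_of_sq_add_sq_eq {k₁ k₂ c : ℝ} (hk₁ : 0 < k₁) (hc : c ^ 2 ≤ 1)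
    (h1 : k₁ ^ 2 + k₂ ^ 2 = 1 + 3 * c ^ 2) : k₂ ^ 2 < 4 := by
  nlinarith [pow_pos hk₁ 2]

theorem stmt_16_general (k₁ k₂ k₃ α₀ : ℝ)
    (hk₁ : 0 < k₁) (hk₂ : 0 < k₂)
    (h1 : k₁ ^ 2 + k₂ ^ 2 = 1 + 3 * Real.cos α₀ ^ 2)
    (h2 : k₂ * k₃ = -(3 / 2) * Real.sin (2 * α₀))
    (h3 : k₁ ^ 2 * Real.sin α₀ ^ 2 = (k₂ * Real.cos α₀ - k₃ * Real.sin α₀) ^ 2) :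
    (k₂ ^ 2) ^ 2 + Real.sin α₀ ^ 2 * (3 * Real.cos α₀ ^ 2 - 1) * k₂ ^ 2
        + 9 * Real.sin α₀ ^ 4 * Real.cos α₀ ^ 2 = 0 ∧
      0 < k₂ ^ 2 ∧ k₂ ^ 2 < 4 := by
  rw [sin_two_mul] at h2
  exact ⟨quadratic_of_curvature_eqns (sin_sq_add_cos_sq α₀) h1 h2 h3, pow_pos hk₂ 2,
    sq_lt_four_of_sq_add_sq_eq hk₁ (cos_sq_le_one α₀) h1⟩

theorem stmt_16 (k₁ k₂ k₃ α₀ : ℝ)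
    (hk₁ : 0 < k₁) (hk₂ : 0 < k₂) (hk₃ : 0 < k₃)
    (hα : α₀ ∈ Set.Ioo (π / 2) π ∪ Set.Ioo (3 * π / 2) (2 * π))
    (h1 : k₁ ^ 2 + k₂ ^ 2 = 1 + 3 * Real.cos α₀ ^ 2)
    (h2 : k₂ * k₃ = -(3 / 2) * Real.sin (2 * α₀))
    (h3 : k₁ ^ 2 * Real.sin α₀ ^ 2 = (k₂ * Real.cos α₀ - k₃ * Real.sin α₀) ^ 2) :
    (k₂ ^ 2) ^ 2 + Real.sin α₀ ^ 2 * (3 * Real.cos α₀ ^ 2 - 1) * k₂ ^ 2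
        + 9 * Real.sin α₀ ^ 4 * Real.cos α₀ ^ 2 = 0 ∧
      0 < k₂ ^ 2 ∧ k₂ ^ 2 < 4 :=
  stmt_16_general k₁ k₂ k₃ α₀ hk₁ hk₂ h1 h2 h3
end
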